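/- If L is a genlex ordering of X ⊆ {0,1}^n with n ≥ 1, then c(L) = c(L^{0-}) + c(L^{1-}) + n whenever both X^0 and X^1 are nonempty, where c is the prefix-change cost. -/

import Mathlib

/-! Because `L` is genlex, the strings sharing the last bit of `L`'s first string form a prefix
of `L`, so `L` is one of `L^0, L^1` and `L^1, L^0`. Within a block the last bit is constant, so
each step costs what it costs after deleting that bit; the single step between the blocks flips
the last bit and costs `n + 1`. -/

def lamPos {n : ℕ} (x y : Fin n → Bool) : ℕ :=
  (Finset.univ.filter (fun i : Fin n => x i ≠ y i)).sup (fun i => (i : ℕ) + 1)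

def hamming {n : ℕ} (x y : Fin n → Bool) : ℕ :=
  (Finset.univ.filter (fun i : Fin n => x i ≠ y i)).card

def sameSuffix {n : ℕ} (k : ℕ) (x y : Fin n → Bool) : Prop :=
  ∀ i : Fin n, n - k ≤ (i : ℕ) → x i = y i

def IsOrdering {n : ℕ} (X : Finset (Fin n → Bool)) (L : List (Fin n → Bool)) : Prop :=
  L.Nodup ∧ ∀ x, x ∈ L ↔ x ∈ X

def IsGenlex {n : ℕ} (L : List (Fin n → Bool)) : Prop :=
  ∀ (k i j m : ℕ) (hij : i ≤ j) (hjm : j ≤ m) (hm : m < L.length),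
    sameSuffix k (L.get ⟨i, by omega⟩) (L.get ⟨m, hm⟩) →
    sameSuffix k (L.get ⟨i, by omega⟩) (L.get ⟨j, by omega⟩)

def cost {n : ℕ} (L : List (Fin n → Bool)) : ℕ :=
  (L.zipWith lamPos L.tail).sum

open Finset in
theorem lamPos_eq_sup_init {n : ℕ} (x y : Fin (n + 1) → Bool) :
    lamPos x y = (if x (Fin.last n) ≠ y (Fin.last n) then n + 1 else 0) ⊔
      lamPos (Fin.init x) (Fin.init y) := by
  unfold lamPos
  rw [Fin.univ_castSuccEmb, filter_cons]
  split_ifs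
  · rw [sup_cons, filter_map, sup_map]; rfl
  · rw [filter_map, sup_map, Nat.zero_max]; rfl

theorem lamPos_le {n : ℕ} (x y : Fin n → Bool) : lamPos x y ≤ n :=
  Finset.sup_le fun i _ => i.isLt

theorem lamPos_init_of_last_eq {n : ℕ} {x y : Fin (n + 1) → Bool}
    (h : x (Fin.last n) = y (Fin.last n)) :
    lamPos (Fin.init x) (Fin.init y) = lamPos x y := by
  simp [lamPos_eq_sup_init x y, h]

theorem lamPos_of_last_ne {n : ℕ} {x y : Fin (n + 1) → Bool}
    (h : x (Fin.last n) ≠ y (Fin.last n)) : lamPos x y = n + 1 := by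
  simpa [lamPos_eq_sup_init x y, h] using (lamPos_le (Fin.init x) (Fin.init y)).trans n.le_succ

theorem cost_cons_cons {n : ℕ} (x y : Fin n → Bool) (l : List (Fin n → Bool)) :
    cost (x :: y :: l) = lamPos x y + cost (y :: l) := rfl

theorem cost_append {n : ℕ} {A B : List (Fin n → Bool)} (hA : A ≠ []) (hB : B ≠ []) :
    cost (A ++ B) = cost A + lamPos (A.getLast hA) (B.head hB) + cost B := by
  induction A with
  | nil => contradiction
  | cons a A ih =>
    obtain ⟨b, B, rfl⟩ := List.exists_cons_of_ne_nil hB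
    cases A with
    | nil => simp [cost]
    | cons a' A =>
      rw [List.cons_append, List.cons_append, cost_cons_cons, ← List.cons_append,
        ih (List.cons_ne_nil _ _), cost_cons_cons, List.getLast_cons (List.cons_ne_nil _ _)]
      omega

theorem cost_map_of_lamPos_eq {m n : ℕ} (f : (Fin m → Bool) → Fin n → Bool)
    {L : List (Fin m → Bool)} (hf : ∀ x ∈ L, ∀ y ∈ L, lamPos (f x) (f y) = lamPos x y) :
    cost (L.map f) = cost L := by
  induction L with
  | nil => rfl
  | cons x L ih =>
    cases L with
    | nil => rfl
    | cons y L =>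
      simp only [List.map_cons] at ih ⊢
      rw [cost_cons_cons, cost_cons_cons, hf x (by simp) y (by simp),
        ih fun a ha b hb => hf a (List.mem_cons_of_mem _ ha) b (List.mem_cons_of_mem _ hb)]

theorem cost_map_init_of_last_eq {n : ℕ} {L : List (Fin (n + 1) → Bool)} {b : Bool}
    (hL : ∀ x ∈ L, x (Fin.last n) = b) : cost (L.map Fin.init) = cost L :=
  cost_map_of_lamPos_eq _ fun x hx y hy => lamPos_init_of_last_eq ((hL x hx).trans (hL y hy).symm)

theorem cost_append_of_last_eq {n : ℕ} {A B : List (Fin (n + 1) → Bool)} {b b' : Bool}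
    (hbb' : b ≠ b') (hA : ∀ x ∈ A, x (Fin.last n) = b) (hB : ∀ x ∈ B, x (Fin.last n) = b')
    (hA0 : A ≠ []) (hB0 : B ≠ []) :
    cost (A ++ B) = cost (A.map Fin.init) + cost (B.map Fin.init) + (n + 1) := by
  have hjump : lamPos (A.getLast hA0) (B.head hB0) = n + 1 := by
    refine lamPos_of_last_ne ?_
    rw [hA _ (List.getLast_mem hA0), hB _ (List.head_mem hB0)]
    exact hbb'
  rw [cost_append hA0 hB0, hjump, cost_map_init_of_last_eq hA, cost_map_init_of_last_eq hB]
  ring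

theorem cost_filter_append_filter {n : ℕ} (L : List (Fin (n + 1) → Bool)) {b b' : Bool}
    (hbb' : b ≠ b') (hb : L.filter (fun x => x (Fin.last n) == b) ≠ [])
    (hb' : L.filter (fun x => x (Fin.last n) == b') ≠ []) :
    cost (L.filter (fun x => x (Fin.last n) == b) ++ L.filter (fun x => x (Fin.last n) == b')) =
      cost ((L.filter (fun x => x (Fin.last n) == b)).map Fin.init) +
        cost ((L.filter (fun x => x (Fin.last n) == b')).map Fin.init) + (n + 1) :=
  cost_append_of_last_eq hbb' (fun _ hx => by simpa using (List.mem_filter.1 hx).2)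
    (fun _ hx => by simpa using (List.mem_filter.1 hx).2) hb hb'

theorem List.filter_append_filter_not_of_pairwise {α : Type*} {p : α → Bool} :
    ∀ {l : List α}, l.Pairwise (fun a b => p b → p a) → l.filter p ++ l.filter (!p ·) = l
  | [], _ => rfl
  | a :: l, h => by
    rw [pairwise_cons] at h
    by_cases ha : p a
    · rw [filter_cons_of_pos ha, filter_cons_of_neg (by simpa using ha), cons_append,
        filter_append_filter_not_of_pairwise h.2]
    · have hl : ∀ b ∈ l, ¬p b := fun b hb hpb => ha (h.1 b hb hpb)
      rw [filter_cons_of_neg ha, filter_cons_of_pos (by simpa using ha),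
        filter_eq_nil_iff.2 hl, filter_eq_self.2 fun b hb => by simpa using hl b hb, nil_append]

theorem sameSuffix_one_iff {n : ℕ} {x y : Fin (n + 1) → Bool} :
    sameSuffix 1 x y ↔ x (Fin.last n) = y (Fin.last n) := by
  refine ⟨fun h => h _ (by simp), fun h i hi => ?_⟩
  rwa [show i = Fin.last n from Fin.ext (by have := i.isLt; simp; omega)]

theorem IsGenlex.pairwise_last_eq_head {n : ℕ} {L : List (Fin (n + 1) → Bool)}
    (hgen : IsGenlex L) (hL : L ≠ []) :
    L.Pairwise fun x y => y (Fin.last n) = (L.head hL) (Fin.last n) →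
      x (Fin.last n) = (L.head hL) (Fin.last n) := by
  rw [List.pairwise_iff_getElem]
  intro i j hi hj hij hjb
  have := hgen 1 0 i j (Nat.zero_le i) hij.le hj
  simp only [List.get_eq_getElem, sameSuffix_one_iff, ← List.head_eq_getElem hL] at this
  exact (this hjb.symm).symm

theorem IsGenlex.eq_filter_append_filter {n : ℕ} {L : List (Fin (n + 1) → Bool)}
    (hgen : IsGenlex L) :
    L.filter (fun x => x (Fin.last n) == false) ++
        L.filter (fun x => x (Fin.last n) == true) = L ∨
      L.filter (fun x => x (Fin.last n) == true) ++
        L.filter (fun x => x (Fin.last n) == false) = L := by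
  rcases eq_or_ne L [] with rfl | hL
  · simp
  have := List.filter_append_filter_not_of_pairwise
    (p := fun x : Fin (n + 1) → Bool => x (Fin.last n) == (L.head hL) (Fin.last n))
    (by simpa only [beq_iff_eq] using hgen.pairwise_last_eq_head hL)
  generalize (L.head hL) (Fin.last n) = b at this
  cases b
  · left; simpa using this
  · right; simpa using this

theorem genlex_cost_recursion {n : ℕ} (X : Finset (Fin (n + 1) → Bool))
    (L : List (Fin (n + 1) → Bool)) (hL : IsOrdering X L) (hgen : IsGenlex L)
    (h0 : ∃ x ∈ X, x (Fin.last n) = false) (h1 : ∃ x ∈ X, x (Fin.last n) = true) :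
    cost L =
      cost ((L.filter (fun x => x (Fin.last n) == false)).map
          (fun x => fun i : Fin n => x i.castSucc))
      + cost ((L.filter (fun x => x (Fin.last n) == true)).map
          (fun x => fun i : Fin n => x i.castSucc))
      + (n + 1) := by
  have hne : ∀ b, (∃ x ∈ X, x (Fin.last n) = b) →
      L.filter (fun x => x (Fin.last n) == b) ≠ [] := by
    rintro b ⟨x, hx, hxb⟩
    exact List.ne_nil_of_mem (List.mem_filter.2 ⟨(hL.2 x).2 hx, by simp [hxb]⟩)
  rcases hgen.eq_filter_append_filter with h | h
  · conv_lhs => rw [← h]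
    exact cost_filter_append_filter L Bool.false_ne_true (hne false h0) (hne true h1)
  · conv_lhs => rw [← h]
    rw [add_comm (cost _) (cost _)]
    exact cost_filter_append_filter L Bool.false_ne_true.symm (hne true h1) (hne false h0)
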